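/- The function w satisfies the conjugacy gluing condition on the hyperbola branch R: for every real θ₁ < θ₁⁻, writing x = −(σ₁₂θ₁ + μ₂)/σ₂₂ and y = √(−d(θ₁))/σ₂₂ for the conjugate roots x ± iy of γ(θ₁, ·) = 0, one has w(x + iy) = w(x − iy). -/

import Mathlib

/-!
The affine map `χ` has real coefficients, so it sends the conjugate roots `x ± iy` to conjugate
points, and it maps them onto the curve `t ↦ cos (β + i t)`, a branch of the hyperbola with foci
`±1` through `cos β`. By the identity theorem `T_a (cos u) = cos (a u)` on the strip
`|Re u| < π`, so for `a = π / β` we get `T_a (cos (β ± i t)) = cos (π ± i a t) = -cosh (a t)`,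
which is even in `t`.
-/

/-- The cut plane `ℂ ∖ (−∞, −1]`. -/
def cutC : Set ℂ := {z : ℂ | z.im = 0 ∧ z.re ≤ -1}ᶜ

/-- `T` is an analytic function on the cut plane `ℂ ∖ (−∞, −1]` agreeing with
`x ↦ cos (a · arccos x)` on `(−1, 1]`. -/
def IsChebyshev (a : ℝ) (T : ℂ → ℂ) : Prop :=
  (∀ z ∈ cutC, DifferentiableAt ℂ T z) ∧
  ∀ x : ℝ, x ∈ Set.Ioc (-1 : ℝ) 1 → T (x : ℂ) = ((Real.cos (a * Real.arccos x) : ℝ) : ℂ)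

/-- The affine map `χ(θ₂) = −(2θ₂ − (θ₂⁺+θ₂⁻))/(θ₂⁺−θ₂⁻)`. -/
noncomputable def chiMap (θ2p θ2m : ℝ) (θ : ℂ) : ℂ :=
  -(2 * θ - ((θ2p : ℂ) + (θ2m : ℂ))) / ((θ2p : ℂ) - (θ2m : ℂ))

open Complex ComplexConjugate Real Topology

lemma Real.neg_one_lt_cos {x : ℝ} (h₁ : -π < x) (h₂ : x < π) : -1 < Real.cos x := by
  rw [← Real.cos_abs, ← Real.cos_pi]
  exact Real.cos_lt_cos_of_nonneg_of_le_pi (abs_nonneg x) le_rfl (abs_lt.2 ⟨h₁, h₂⟩)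

lemma cos_mem_cutC {u : ℂ} (hu : u.re ∈ Set.Ioo (-π) π) : Complex.cos u ∈ cutC := by
  have hcos : Complex.cos u = (Real.cos u.re * Real.cosh u.im : ℝ)
      - (Real.sin u.re * Real.sinh u.im : ℝ) * I := by
    conv_lhs => rw [← re_add_im u]
    rw [cos_add_mul_I]; push_cast; rfl
  rintro ⟨him, hre⟩
  rw [hcos] at him hre
  simp only [sub_im, sub_re, ofReal_im, ofReal_re, mul_im, mul_re, I_re, I_im] at him hre
  simp only [mul_zero, mul_one, add_zero, zero_sub, neg_eq_zero, sub_zero] at him hre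
  rcases mul_eq_zero.1 him with hsin | hsinh
  · rw [(Real.sin_eq_zero_iff_of_lt_of_lt hu.1 hu.2).1 hsin, Real.cos_zero, one_mul] at hre
    linarith [Real.one_le_cosh u.im]
  · rw [Real.sinh_eq_zero.1 hsinh, Real.cosh_zero, mul_one] at hre
    linarith [Real.neg_one_lt_cos hu.1 hu.2]

namespace IsChebyshev

variable {a : ℝ} {T : ℂ → ℂ}

lemma apply_cos_ofReal (hT : IsChebyshev a T) {v : ℝ} (hv : v ∈ Set.Ioo 0 π) :
    T (Complex.cos v) = Complex.cos (a * v) := by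
  have hcos : Real.cos v ∈ Set.Ioc (-1) 1 :=
    ⟨Real.neg_one_lt_cos (by linarith [hv.1, Real.pi_pos]) hv.2, Real.cos_le_one v⟩
  rw [← ofReal_cos, hT.2 _ hcos, Real.arccos_cos hv.1.le hv.2.le]
  push_cast; rfl

lemma apply_cos (hT : IsChebyshev a T) {u : ℂ} (hu : u.re ∈ Set.Ioo (-π) π) :
    T (Complex.cos u) = Complex.cos (a * u) := by
  set S : Set ℂ := re ⁻¹' Set.Ioo (-π) π
  have hS : IsOpen S := isOpen_Ioo.preimage continuous_re
  have hf : AnalyticOnNhd ℂ (fun u => T (Complex.cos u)) S :=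
    DifferentiableOn.analyticOnNhd (fun u hu =>
      ((hT.1 _ (cos_mem_cutC hu)).comp u (differentiable_cos u)).differentiableWithinAt) hS
  have hg : AnalyticOnNhd ℂ (fun u => Complex.cos (a * u)) S :=
    (Complex.differentiable_cos.comp (differentiable_id.const_mul _)).differentiableOn.analyticOnNhd hS
  have hreal : ∀ᶠ v : ℝ in 𝓝[≠] (π / 2), T (Complex.cos v) = Complex.cos (a * v) :=
    nhdsWithin_le_nhds <| Filter.mem_of_superset
      (Ioo_mem_nhds (by linarith [Real.pi_pos]) (by linarith [Real.pi_pos]))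
      fun _ hv => hT.apply_cos_ofReal hv
  have hofReal : Filter.Tendsto ((↑) : ℝ → ℂ) (𝓝[≠] (π / 2)) (𝓝[≠] ↑(π / 2)) :=
    continuous_ofReal.continuousWithinAt.tendsto_nhdsWithin fun _ hv => ofReal_injective.ne hv
  have hfreq := hofReal.frequently (p := fun z => T (Complex.cos z) = Complex.cos (a * z))
    hreal.frequently
  refine hf.eqOn_of_preconnected_of_frequently_eq hg
    ((convex_Ioo _ _).linear_preimage reLm).isPreconnected ?_ (by exact_mod_cast hfreq) hu
  simp only [S, Set.mem_preimage, ofReal_re, Set.mem_Ioo]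
  constructor <;> linarith [Real.pi_pos]

lemma apply_conj_cos (hT : IsChebyshev a T) {β : ℝ}
    (hβ₀ : 0 < β) (hβπ : β < π) (haβ : a * β = π) (t : ℝ) :
    T (conj (Complex.cos (β + t * I))) = T (Complex.cos (β + t * I)) := by
  have key : ∀ s : ℝ, T (Complex.cos (β + s * I)) = -Complex.cosh (a * s) := fun s => by
    rw [hT.apply_cos (by simpa using ⟨by linarith, hβπ⟩), mul_add, ← ofReal_mul, haβ, ← mul_assoc,
      cos_add_mul_I, Complex.cos_pi, Complex.sin_pi]
    ring
  rw [← cos_conj, map_add, map_mul, conj_ofReal, conj_ofReal, conj_I, mul_neg, ← neg_mul,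
    ← ofReal_neg, key, key, ofReal_neg, mul_neg, Complex.cosh_neg]

end IsChebyshev

lemma exists_cos_add_mul_I_eq {K L : ℝ} (hK : 0 ≤ K) (hKL : K ^ 2 - L ^ 2 = 1) (β : ℝ) :
    ∃ t : ℝ, Complex.cos (β + t * I) = Real.cos β * K - Real.sin β * L * I := by
  have hcosh : Real.cosh (Real.arsinh L) = K := by
    rw [Real.cosh_arsinh, ← Real.sqrt_sq hK]
    congr 1
    linarith
  refine ⟨Real.arsinh L, ?_⟩
  rw [cos_add_mul_I, ← ofReal_cos, ← ofReal_sin, ← ofReal_cosh, ← ofReal_sinh, hcosh,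
    Real.sinh_arsinh]

lemma chiMap_conj (p m : ℝ) (z : ℂ) : chiMap p m (conj z) = conj (chiMap p m z) := by
  simp [chiMap, map_div₀, map_ofNat]

lemma chiMap_add_mul_I {p m : ℝ} (h : p ≠ m) (x y : ℝ) :
    chiMap p m (x + y * I) = ((p + m - 2 * x) / (p - m) : ℝ) - (2 * y / (p - m) : ℝ) * I := by
  have h' : (p : ℂ) - m ≠ 0 := sub_ne_zero.2 (ofReal_injective.ne h)
  simp only [chiMap]
  push_cast
  field_simp
  ring

lemma abs_div_sqrt_mul_lt_one {a b c : ℝ} (h : 0 < a * c - b ^ 2) : |b / √(a * c)| < 1 := by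
  have hac : 0 < √(a * c) := Real.sqrt_pos.2 (by nlinarith [sq_nonneg b])
  rw [abs_div, abs_of_pos hac, div_lt_one hac, ← Real.sqrt_sq_eq_abs]
  exact Real.sqrt_lt_sqrt (sq_nonneg b) (by linarith)

lemma exists_chiMap_eq_cos {σ11 σ12 σ22 μ1 μ2 θ1m θ2p θ2m β θ1 x y : ℝ}
    (h22 : 0 < σ22) (hdet : 0 < σ11 * σ22 - σ12 ^ 2) (hμ1 : μ1 ≠ 0)
    (hθ1m : θ1m = ((μ2 * σ12 - μ1 * σ22) -
      √((μ2 * σ12 - μ1 * σ22) ^ 2 + μ2 ^ 2 * (σ11 * σ22 - σ12 ^ 2))) / (σ11 * σ22 - σ12 ^ 2))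
    (hθ2p : θ2p = ((μ1 * σ12 - μ2 * σ11) +
      √((μ1 * σ12 - μ2 * σ11) ^ 2 + μ1 ^ 2 * (σ11 * σ22 - σ12 ^ 2))) / (σ11 * σ22 - σ12 ^ 2))
    (hθ2m : θ2m = ((μ1 * σ12 - μ2 * σ11) -
      √((μ1 * σ12 - μ2 * σ11) ^ 2 + μ1 ^ 2 * (σ11 * σ22 - σ12 ^ 2))) / (σ11 * σ22 - σ12 ^ 2))
    (hcos : Real.cos β = -σ12 / √(σ11 * σ22)) (hsin : Real.sin β ≠ 0) (hθ1 : θ1 < θ1m)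
    (hx : x = -(σ12 * θ1 + μ2) / σ22)
    (hy : y = √(-(θ1 ^ 2 * (σ12 ^ 2 - σ11 * σ22) + 2 * θ1 * (μ2 * σ12 - μ1 * σ22) + μ2 ^ 2))
      / σ22) :
    ∃ t : ℝ, chiMap θ2p θ2m (x + y * I) = Complex.cos (β + t * I) := by
  set D := σ11 * σ22 - σ12 ^ 2 with hD
  set b := μ2 * σ12 - μ1 * σ22 with hb
  set ρ := √(b ^ 2 + μ2 ^ 2 * D)
  set r := √((μ1 * σ12 - μ2 * σ11) ^ 2 + μ1 ^ 2 * D)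
  set s := √(σ11 * σ22)
  set q := √(-(θ1 ^ 2 * (σ12 ^ 2 - σ11 * σ22) + 2 * θ1 * b + μ2 ^ 2))
  set u := b - D * θ1 with hu
  have hρu : ρ < u := by
    rw [hθ1m, lt_div_iff₀ hdet] at hθ1
    linarith
  have hρ : ρ ^ 2 = b ^ 2 + μ2 ^ 2 * D := Real.sq_sqrt (by positivity)
  -- the roots of `d` are `(b ± ρ) / D`, so `-D d(θ₁) = (b - D θ₁)² - ρ²`
  have hq : D * q ^ 2 = u ^ 2 - ρ ^ 2 := by
    have hdisc : D * -(θ1 ^ 2 * (σ12 ^ 2 - σ11 * σ22) + 2 * θ1 * b + μ2 ^ 2) = u ^ 2 - ρ ^ 2 := by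
      rw [hρ]; ring
    rw [Real.sq_sqrt, hdisc]
    nlinarith [sqrt_nonneg (b ^ 2 + μ2 ^ 2 * D)]
  have hr : 0 < r := Real.sqrt_pos.2 (by positivity)
  have hrρ : σ22 * r ^ 2 = σ11 * ρ ^ 2 := by
    rw [hρ, Real.sq_sqrt (by positivity)]; ring
  have hσ : 0 < σ11 * σ22 := by nlinarith [sq_nonneg σ12]
  have hs : s ^ 2 = σ11 * σ22 := Real.sq_sqrt hσ.le
  have hsin2 : Real.sin β ^ 2 = D / (σ11 * σ22) := by
    rw [Real.sin_sq, hcos, div_pow, neg_sq, hs, eq_div_iff hσ.ne', sub_mul,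
      div_mul_cancel₀ _ hσ.ne', one_mul]
  have hs0 : s ≠ 0 := (Real.sqrt_pos.2 hσ).ne'
  have hKL : (s * u / (σ22 * r)) ^ 2 - (D * q / (σ22 * r) / Real.sin β) ^ 2 = 1 := by
    rw [div_pow _ (Real.sin β), hsin2]
    field_simp
    linear_combination u ^ 2 * hs - σ11 * σ22 * hq - σ22 * hrρ
  have hdiff : θ2p - θ2m = 2 * r / D := by rw [hθ2p, hθ2m]; ring
  have hA : (θ2p + θ2m - 2 * x) / (θ2p - θ2m) = Real.cos β * (s * u / (σ22 * r)) := by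
    rw [hdiff, hθ2p, hθ2m, hcos, hx]
    field_simp
    rw [hu, hb, hD]
    ring
  have hB : 2 * y / (θ2p - θ2m) = Real.sin β * (D * q / (σ22 * r) / Real.sin β) := by
    rw [hdiff, hy, mul_div_cancel₀ _ hsin]
    field_simp
  obtain ⟨t, ht⟩ := exists_cos_add_mul_I_eq
    (by have := (sqrt_nonneg _).trans hρu.le; positivity) hKL β
  refine ⟨t, ?_⟩
  rw [ht, chiMap_add_mul_I (sub_ne_zero.1 (hdiff ▸ by positivity)), hA, hB]
  push_cast
  ring

theorem stmt10_general (σ11 σ12 σ22 μ1 μ2 : ℝ)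
    (h22 : 0 < σ22) (hdet : 0 < σ11 * σ22 - σ12 ^ 2)
    (hμ1 : μ1 < 0)
    (θ1m θ2p θ2m β : ℝ)
    (hθ1m : θ1m = ((μ2 * σ12 - μ1 * σ22) -
      Real.sqrt ((μ2 * σ12 - μ1 * σ22) ^ 2 + μ2 ^ 2 * (σ11 * σ22 - σ12 ^ 2))) /
      (σ11 * σ22 - σ12 ^ 2))
    (hθ2p : θ2p = ((μ1 * σ12 - μ2 * σ11) +
      Real.sqrt ((μ1 * σ12 - μ2 * σ11) ^ 2 + μ1 ^ 2 * (σ11 * σ22 - σ12 ^ 2))) /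
      (σ11 * σ22 - σ12 ^ 2))
    (hθ2m : θ2m = ((μ1 * σ12 - μ2 * σ11) -
      Real.sqrt ((μ1 * σ12 - μ2 * σ11) ^ 2 + μ1 ^ 2 * (σ11 * σ22 - σ12 ^ 2))) /
      (σ11 * σ22 - σ12 ^ 2))
    (hβ : β = Real.arccos (-σ12 / Real.sqrt (σ11 * σ22)))
    (T : ℂ → ℂ) (hT : IsChebyshev (Real.pi / β) T) :
    ∀ θ1 : ℝ, θ1 < θ1m → ∀ x y : ℝ,
      x = -(σ12 * θ1 + μ2) / σ22 →
      y = Real.sqrt (-(θ1 ^ 2 * (σ12 ^ 2 - σ11 * σ22) + 2 * θ1 * (μ2 * σ12 - μ1 * σ22)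
            + μ2 ^ 2)) / σ22 →
      T (chiMap θ2p θ2m ((x : ℂ) + (y : ℂ) * Complex.I)) =
        T (chiMap θ2p θ2m ((x : ℂ) - (y : ℂ) * Complex.I)) := by
  intro θ1 hθ1 x y hx hy
  obtain ⟨hc₁, hc₂⟩ := abs_lt.1 (abs_div_sqrt_mul_lt_one (b := -σ12) (by rwa [neg_sq]))
  have hβ₀ : 0 < β := hβ ▸ Real.arccos_pos.2 hc₂
  have hβπ : β < π := hβ ▸ Real.arccos_lt_pi.2 hc₁
  have hcos : Real.cos β = -σ12 / √(σ11 * σ22) := hβ ▸ Real.cos_arccos hc₁.le hc₂.le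
  obtain ⟨t, ht⟩ := exists_chiMap_eq_cos h22 hdet hμ1.ne hθ1m hθ2p hθ2m hcos
    (Real.sin_pos_of_pos_of_lt_pi hβ₀ hβπ).ne' hθ1 hx hy
  have hconj : (x : ℂ) - y * I = conj (x + y * I) := by simp [sub_eq_add_neg]
  rw [hconj, chiMap_conj, ht, hT.apply_conj_cos hβ₀ hβπ (div_mul_cancel₀ _ hβ₀.ne')]

/-- The gluing condition on the hyperbola branch: `w(x + iy) = w(x − iy)` for the
conjugate roots `x ± iy` of `γ(θ₁, ·) = 0`, `θ₁ < θ₁⁻`, where `w = T_{π/β} ∘ χ`. -/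
theorem stmt10 (σ11 σ12 σ22 μ1 μ2 : ℝ)
    (h11 : 0 < σ11) (h22 : 0 < σ22) (hdet : 0 < σ11 * σ22 - σ12 ^ 2)
    (hμ1 : μ1 < 0) (hμ2 : μ2 < 0)
    (θ1m θ2p θ2m β : ℝ)
    (hθ1m : θ1m = ((μ2 * σ12 - μ1 * σ22) -
      Real.sqrt ((μ2 * σ12 - μ1 * σ22) ^ 2 + μ2 ^ 2 * (σ11 * σ22 - σ12 ^ 2))) /
      (σ11 * σ22 - σ12 ^ 2))
    (hθ2p : θ2p = ((μ1 * σ12 - μ2 * σ11) +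
      Real.sqrt ((μ1 * σ12 - μ2 * σ11) ^ 2 + μ1 ^ 2 * (σ11 * σ22 - σ12 ^ 2))) /
      (σ11 * σ22 - σ12 ^ 2))
    (hθ2m : θ2m = ((μ1 * σ12 - μ2 * σ11) -
      Real.sqrt ((μ1 * σ12 - μ2 * σ11) ^ 2 + μ1 ^ 2 * (σ11 * σ22 - σ12 ^ 2))) /
      (σ11 * σ22 - σ12 ^ 2))
    (hβ : β = Real.arccos (-σ12 / Real.sqrt (σ11 * σ22)))
    (T : ℂ → ℂ) (hT : IsChebyshev (Real.pi / β) T) :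
    ∀ θ1 : ℝ, θ1 < θ1m → ∀ x y : ℝ,
      x = -(σ12 * θ1 + μ2) / σ22 →
      y = Real.sqrt (-(θ1 ^ 2 * (σ12 ^ 2 - σ11 * σ22) + 2 * θ1 * (μ2 * σ12 - μ1 * σ22)
            + μ2 ^ 2)) / σ22 →
      T (chiMap θ2p θ2m ((x : ℂ) + (y : ℂ) * Complex.I)) =
        T (chiMap θ2p θ2m ((x : ℂ) - (y : ℂ) * Complex.I)) :=
  stmt10_general σ11 σ12 σ22 μ1 μ2 h22 hdet hμ1 θ1m θ2p θ2m β hθ1m hθ2p hθ2m hβ T hT
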